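/- arXiv:1412.0574 — 3 statements merged into one kernel-verified Lean document; each statement's English description precedes it below -/
import Mathlib

section
/- Let α₁ ≥ α₂ ≥ ⋯ ≥ α₁₄ ≥ 0 be real numbers with α₁ + ⋯ + α₁₄ = 1 and α₁ + α₂ < 1/2. Suppose that no sub-sum ∑_{i ∈ S} αᵢ over a subset S ⊆ {1,…,14} lies in the interval [5/12, 7/12]. Then α₅ > 1/6 and α₁ + α₂ + α₆ + α₇ + ⋯ + α₁₄ < 5/12. -/
/-!
Indexing from `0` as in `Fin 14`, the sums over `{0, 1} ⊆ S ⊆ {2, 3}ᶜ` run from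
`α 0 + α 1 < 5/12` up to `1 - α 2 - α 3 > 7/12`. If `α 4 ≤ 1/6`, every element added on the way
weighs at most `1/6`, the width of the forbidden window, so some intermediate sum would land in
`[5/12, 7/12]`. Once `α 4 > 1/6`, the sum over `{2, 3, 4}ᶜ` cannot exceed `7/12` because
`α 2 + α 3 + α 4 > 1/2`, so it is below `5/12`.
-/

open Finset

section DiscreteIntermediateValue

variable {ι M : Type*} [AddCommGroup M] [LinearOrder M] [IsOrderedAddMonoid M]

theorem exists_subset_add_sum_mem_Icc (w : ι → M) {a b c : M} (D : Finset ι)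
    (hc : c ≤ b) (hD : a ≤ c + ∑ i ∈ D, w i) (hstep : ∀ i ∈ D, w i ≤ b - a) :
    ∃ S ⊆ D, c + ∑ i ∈ S, w i ∈ Set.Icc a b := by
  classical
  induction D using Finset.induction_on with
  | empty => exact ⟨∅, subset_refl _, by simpa using hD, by simpa using hc⟩
  | insert x D hx ih =>
    rw [sum_insert hx] at hD
    by_cases hlow : a ≤ c + ∑ i ∈ D, w i
    · obtain ⟨S, hSD, hS⟩ := ih hlow fun i hi => hstep i (mem_insert_of_mem hi)
      exact ⟨S, hSD.trans (subset_insert x D), hS⟩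
    · have hx_le := hstep x (mem_insert_self x D)
      refine ⟨insert x D, subset_refl _, ?_, ?_⟩ <;> rw [sum_insert hx]
      · exact hD
      · calc c + (w x + ∑ i ∈ D, w i) = w x + (c + ∑ i ∈ D, w i) := add_left_comm _ _ _
          _ ≤ b - a + a := add_le_add hx_le (not_le.mp hlow).le
          _ = b := sub_add_cancel b a

theorem exists_subset_sum_mem_Icc_of_subset [DecidableEq ι] (w : ι → M) {a b : M}
    {A B : Finset ι} (hAB : A ⊆ B) (hA : ∑ i ∈ A, w i ≤ b) (hB : a ≤ ∑ i ∈ B, w i)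
    (hstep : ∀ i ∈ B \ A, w i ≤ b - a) :
    ∃ S, A ⊆ S ∧ S ⊆ B ∧ ∑ i ∈ S, w i ∈ Set.Icc a b := by
  rw [← sum_sdiff hAB, add_comm] at hB
  obtain ⟨S, hS, hsum⟩ := exists_subset_add_sum_mem_Icc w (B \ A) hA hB hstep
  have hdisj : Disjoint A S := disjoint_of_subset_right hS disjoint_sdiff
  refine ⟨A ∪ S, subset_union_left, union_subset hAB (hS.trans sdiff_subset), ?_⟩
  rwa [sum_union hdisj]

end DiscreteIntermediateValue

section FourteenWeights

variable (α : Fin 14 → ℝ)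

theorem sum_fin14_eq_add_sum_filter_five_le :
    ∑ i, α i =
      α 0 + α 1 + α 2 + α 3 + α 4 + ∑ i ∈ univ.filter (fun i : Fin 14 => 5 ≤ (i : ℕ)), α i := by
  rw [← sum_filter_add_sum_filter_not univ (fun i : Fin 14 => 5 ≤ (i : ℕ)),
    show univ.filter (fun i : Fin 14 => ¬ 5 ≤ (i : ℕ)) = {0, 1, 2, 3, 4} by decide]
  simp only [mem_insert, zero_ne_one, Fin.reduceEq, mem_singleton, or_self, not_false_eq_true,
    sum_insert, sum_singleton]
  ring

theorem one_sixth_lt_fifth_of_no_sum_mem_Icc (hmono : ∀ i j : Fin 14, i ≤ j → α j ≤ α i)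
    (hsum : ∑ i, α i = 1) (h01 : α 0 + α 1 < 5 / 12)
    (hnosub : ∀ S : Finset (Fin 14), ∑ i ∈ S, α i ∉ Set.Icc (5 / 12 : ℝ) (7 / 12)) :
    1 / 6 < α 4 := by
  by_contra! h4
  have hcompl : ∑ i ∈ ({2, 3} : Finset (Fin 14))ᶜ, α i = 1 - α 2 - α 3 := by
    rw [← hsum, ← sum_compl_add_sum {2, 3}, sum_pair (by decide)]
    ring
  have h2 := hmono 0 2 (by decide)
  have h3 := hmono 1 3 (by decide)
  obtain ⟨S, -, -, hS⟩ := exists_subset_sum_mem_Icc_of_subset α (a := 5 / 12) (b := 7 / 12)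
    (A := {0, 1}) (B := {2, 3}ᶜ) (by decide)
    (by rw [sum_pair (by decide)]; linarith) (by rw [hcompl]; linarith)
    (fun i hi => (hmono 4 i (by revert i; decide)).trans (by linarith))
  exact hnosub S hS

end FourteenWeights

theorem stmt_0_general (α : Fin 14 → ℝ)
    (hmono : ∀ i j : Fin 14, i ≤ j → α j ≤ α i)
    (hsum : ∑ i, α i = 1)
    (h12 : α 0 + α 1 < 1 / 2)
    (hnosub : ∀ S : Finset (Fin 14),
      ¬ (5 / 12 ≤ ∑ i ∈ S, α i ∧ ∑ i ∈ S, α i ≤ 7 / 12)) :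
    α 4 > 1 / 6 ∧
      α 0 + α 1 + ∑ i ∈ Finset.univ.filter (fun i : Fin 14 => 5 ≤ (i : ℕ)), α i
        < 5 / 12 := by
  have hgap (S : Finset (Fin 14)) : ∑ i ∈ S, α i < 5 / 12 ∨ 7 / 12 < ∑ i ∈ S, α i := by
    by_contra! h
    exact hnosub S h
  have h01 : α 0 + α 1 < 5 / 12 := by
    rcases hgap {0, 1} with h | h <;> rw [sum_pair (by decide)] at h <;> linarith
  have h4 := one_sixth_lt_fifth_of_no_sum_mem_Icc α hmono hsum h01 hnosub
  refine ⟨h4, ?_⟩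
  have hsplit := sum_fin14_eq_add_sum_filter_five_le α
  have h24 := hmono 2 4 (by decide)
  have h34 := hmono 3 4 (by decide)
  rcases hgap ({0, 1} ∪ univ.filter (fun i : Fin 14 => 5 ≤ (i : ℕ))) with h | h <;>
    rw [sum_union (by decide), sum_pair (by decide)] at h <;> linarith

/-- Lemma 9 (combinatorial lemma): if `α₁ ≥ ⋯ ≥ α₁₄ ≥ 0` sum to `1`, `α₁ + α₂ < 1/2`,
and no sub-sum lies in `[5/12, 7/12]`, then `α₅ > 1/6` and
`α₁ + α₂ + α₆ + ⋯ + α₁₄ < 5/12`. -/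
theorem stmt_0 (α : Fin 14 → ℝ)
    (hmono : ∀ i j : Fin 14, i ≤ j → α j ≤ α i)
    (hnonneg : ∀ i, 0 ≤ α i)
    (hsum : ∑ i, α i = 1)
    (h12 : α 0 + α 1 < 1 / 2)
    (hnosub : ∀ S : Finset (Fin 14),
      ¬ (5 / 12 ≤ ∑ i ∈ S, α i ∧ ∑ i ∈ S, α i ≤ 7 / 12)) :
    α 4 > 1 / 6 ∧
      α 0 + α 1 + ∑ i ∈ Finset.univ.filter (fun i : Fin 14 => 5 ≤ (i : ℕ)), α i
        < 5 / 12 :=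
  stmt_0_general α hmono hsum h12 hnosub
end

section
/- Let α₁ ≥ α₂ ≥ ⋯ ≥ α₁₄ ≥ 0 be real numbers with α₁ + ⋯ + α₁₄ = 1. If α₁ + α₂ < 1/2, then there exists a subset S ⊆ {1,…,14} with 2/5 ≤ ∑_{i ∈ S} αᵢ ≤ 3/5. -/
/-!
If `α₁ + α₂ ≥ 2/5` then `S = {1, 2}` works, its sum being below `1/2`. Otherwise `α₁ < 2/5` and
`α₂ < 1/5`, so every `αᵢ` with `i ≥ 2` is below `1/5`. The prefix sums `α₁ + ⋯ + αₖ` climb from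
`α₁ < 2/5` to `1`; the first one reaching `2/5` overshoots by less than its last term, hence stays
below `3/5`.
-/

open Finset

theorem Nat.exists_lt_le_succ_of_lt_of_le {β : Type*} [LinearOrder β] {g : ℕ → β} {a : β}
    {m n : ℕ} (hmn : m ≤ n) (hm : g m < a) (hn : a ≤ g n) :
    ∃ k, m ≤ k ∧ k < n ∧ g k < a ∧ a ≤ g (k + 1) := by
  induction n, hmn using Nat.le_induction with
  | base => exact absurd hn (not_le.2 hm)
  | succ n hmn ih =>
    by_cases hprev : a ≤ g n
    · obtain ⟨k, hmk, hkn, hk⟩ := ih hprev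
      exact ⟨k, hmk, hkn.trans n.lt_succ_self, hk⟩
    · exact ⟨n, hmn, n.lt_succ_self, not_le.1 hprev, hn⟩

theorem Fin.sum_filter_val_lt_succ {M : Type*} [AddCommMonoid M] {n k : ℕ} (f : Fin n → M)
    (hk : k < n) :
    ∑ j ∈ univ.filter (fun j : Fin n => (j : ℕ) < k + 1), f j
      = ∑ j ∈ univ.filter (fun j : Fin n => (j : ℕ) < k), f j + f ⟨k, hk⟩ := by
  have hinsert : univ.filter (fun j : Fin n => (j : ℕ) < k + 1)
      = insert ⟨k, hk⟩ (univ.filter (fun j : Fin n => (j : ℕ) < k)) := by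
    ext j
    simp only [mem_filter, mem_univ, true_and, mem_insert, Fin.ext_iff]
    omega
  rw [hinsert, sum_insert (by simp), add_comm]

theorem exists_finset_sum_mem_Ico {n : ℕ} (α : Fin (n + 1) → ℝ) {a ε : ℝ} (h0 : α 0 < a)
    (hsmall : ∀ j, j ≠ 0 → α j ≤ ε) (htotal : a ≤ ∑ j, α j) :
    ∃ S : Finset (Fin (n + 1)), a ≤ ∑ j ∈ S, α j ∧ ∑ j ∈ S, α j < a + ε := by
  set g : ℕ → ℝ := fun k => ∑ j ∈ univ.filter (fun j : Fin (n + 1) => (j : ℕ) < k), α j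
  have hg1 : g 1 = α 0 := by
    simpa [g] using Fin.sum_filter_val_lt_succ α n.succ_pos
  have hgn : g (n + 1) = ∑ j, α j := by
    simp only [g, Fin.is_lt, filter_true]
  obtain ⟨k, hk1, hkn, hgk, hgk1⟩ :=
    Nat.exists_lt_le_succ_of_lt_of_le (g := g) (by omega) (hg1 ▸ h0) (hgn ▸ htotal)
  have hstep : g (k + 1) = g k + α ⟨k, hkn⟩ := Fin.sum_filter_val_lt_succ α hkn
  have hαk : α ⟨k, hkn⟩ ≤ ε := hsmall _ (Fin.ne_of_val_ne (Nat.pos_iff_ne_zero.1 hk1))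
  exact ⟨_, hgk1, by linarith⟩

/-- If `α₁ ≥ ⋯ ≥ α₁₄ ≥ 0` sum to `1` and `α₁ + α₂ < 1/2`, then some subset
`S ⊆ {1,…,14}` has `2/5 ≤ ∑_{i ∈ S} αᵢ ≤ 3/5`. -/
theorem stmt_1 (α : Fin 14 → ℝ)
    (hmono : ∀ i j : Fin 14, i ≤ j → α j ≤ α i)
    (hnonneg : ∀ i, 0 ≤ α i)
    (hsum : ∑ i, α i = 1)
    (h12 : α 0 + α 1 < 1 / 2) :
    ∃ S : Finset (Fin 14), 2 / 5 ≤ ∑ i ∈ S, α i ∧ ∑ i ∈ S, α i ≤ 3 / 5 := by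
  by_cases hpair : 2 / 5 ≤ α 0 + α 1
  · refine ⟨{0, 1}, ?_, ?_⟩ <;> rw [sum_pair (by decide)] <;> linarith
  push Not at hpair
  have h1 : α 1 < 1 / 5 := by linarith [hmono 0 1 (by decide)]
  obtain ⟨S, hS, hS'⟩ := exists_finset_sum_mem_Ico (n := 13) α (a := 2 / 5) (ε := α 1)
    (by linarith [hnonneg 1]) (fun j hj => hmono 1 j (Fin.one_le_of_ne_zero hj))
    (by rw [hsum]; norm_num)
  exact ⟨S, hS, by linarith⟩
end

section
/- Let 0 < x₀ ≤ x be reals with x₀ = N₁⋯N₁₄ where N₁ ≥ ⋯ ≥ N₁₄ ≥ 1, and write Nᵢ = x₀^{αᵢ}. Suppose N₁N₂ < x₀^{1/2}, no sub-product ∏_{i∈S} Nᵢ lies in [x₀^{5/12}, x₀^{7/12}], and α₁+⋯+α₁₄ = 1. Then setting M = N₁N₂N₆⋯N₁₄ and N = N₃N₄, one has M < x₀^{5/12}, N < x₀^{5/12}, N₅ > x₀^{1/6}, M ≥ N, and M·N₅ ≥ x₀^{1/2}. -/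
/-!
Split `x₀ = M · N · N₅` with `M = N₁N₂N₆⋯N₁₄` and `N = N₃N₄`. Since no sub-product lies in the
gap `[x₀^{5/12}, x₀^{7/12}]` and complementary sub-products multiply to
`x₀ = x₀^{5/12} · x₀^{7/12}`, a sub-product is below the gap exactly when its complement is above
it. `N ≤ N₁N₂ < x₀^{1/2}` is below the gap. If `M` were above it, `N N₅` would be below it,
forcing `N₅ < x₀^{1/6}`; but then, starting from `N₁N₂` and multiplying in the factors
`N₆, …, N₁₄ < x₀^{1/6}` one at a time, no partial product can jump over the gap, whose ratio is
`x₀^{1/6}`, so `M` is below it after all. The remaining inequalities follow from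
`x₀ = M · N · N₅` with `M, N < x₀^{5/12}`.
-/

open Finset

def SubprodsAvoid {ι : Type*} (N : ι → ℝ) (I : Set ℝ) : Prop :=
  ∀ S : Finset ι, ∏ i ∈ S, N i ∉ I

section Gap

variable {ι : Type*} {N : ι → ℝ} {a b : ℝ}

theorem SubprodsAvoid.prod_lt_of_le (hgap : SubprodsAvoid N (Set.Icc a b)) {S : Finset ι}
    (hS : ∏ i ∈ S, N i ≤ b) : ∏ i ∈ S, N i < a :=
  lt_of_not_ge fun h => hgap S ⟨h, hS⟩

theorem SubprodsAvoid.lt_prod_of_le (hgap : SubprodsAvoid N (Set.Icc a b)) {S : Finset ι}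
    (hS : a ≤ ∏ i ∈ S, N i) : b < ∏ i ∈ S, N i :=
  lt_of_not_ge fun h => hgap S ⟨hS, h⟩

theorem SubprodsAvoid.prod_union_lt [DecidableEq ι] (hgap : SubprodsAvoid N (Set.Icc a b))
    (hN : ∀ i, 0 ≤ N i) {S : Finset ι} (hS : ∏ i ∈ S, N i < a) {T : Finset ι}
    (hT : ∀ i ∈ T, a * N i ≤ b) : ∏ i ∈ S ∪ T, N i < a := by
  induction T using Finset.induction_on with
  | empty => simpa using hS
  | insert j T _ ih =>
    have ih := ih fun i hi => hT i (mem_insert_of_mem hi)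
    rw [union_insert]
    by_cases hj : j ∈ S ∪ T
    · rwa [insert_eq_of_mem hj]
    · refine hgap.prod_lt_of_le ?_
      calc ∏ i ∈ insert j (S ∪ T), N i = N j * ∏ i ∈ S ∪ T, N i := prod_insert hj
        _ ≤ N j * a := mul_le_mul_of_nonneg_left ih.le (hN j)
        _ = a * N j := mul_comm _ _
        _ ≤ b := hT j (mem_insert_self j T)

end Gap

theorem prod_pair_mul_prod_filter_five_le (N : Fin 14 → ℝ) :
    N 0 * N 1 * ∏ i ∈ univ.filter (fun i : Fin 14 => 5 ≤ (i : ℕ)), N i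
      = ∏ i ∈ {0, 1} ∪ univ.filter (fun i : Fin 14 => 5 ≤ (i : ℕ)), N i := by
  rw [prod_union (by decide), prod_pair (by decide)]

theorem prod_univ_fin_fourteen (N : Fin 14 → ℝ) :
    ∏ i, N i = (N 0 * N 1 * ∏ i ∈ univ.filter (fun i : Fin 14 => 5 ≤ (i : ℕ)), N i)
      * (N 2 * N 3 * N 4) := by
  rw [prod_pair_mul_prod_filter_five_le,
    ← prod_mul_prod_compl ({0, 1} ∪ univ.filter (fun i : Fin 14 => 5 ≤ (i : ℕ)))]
  rw [show ({0, 1} ∪ univ.filter (fun i : Fin 14 => 5 ≤ (i : ℕ)))ᶜ = {2, 3, 4} by decide]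
  simp only [prod_insert (show (2 : Fin 14) ∉ ({3, 4} : Finset _) by decide),
    prod_pair (show (3 : Fin 14) ≠ 4 by decide), mul_assoc]

section Grouping

variable {N : Fin 14 → ℝ} {a b s : ℝ}

theorem pair_mul_prod_filter_five_le_lt (hmono : Antitone N) (hN : ∀ i, 0 ≤ N i)
    (ha : 0 < a) (hprod : a * b = ∏ i, N i) (has : a * s = b) (hs : a ≤ s ^ 3)
    (h01 : N 0 * N 1 ≤ b) (hgap : SubprodsAvoid N (Set.Icc a b)) :
    N 0 * N 1 * ∏ i ∈ univ.filter (fun i : Fin 14 => 5 ≤ (i : ℕ)), N i < a := by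
  rw [prod_pair_mul_prod_filter_five_le]
  by_contra! hM
  have hcompl : N 2 * N 3 * N 4 < a := by
    have hMb := hgap.lt_prod_of_le hM
    rw [prod_univ_fin_fourteen, prod_pair_mul_prod_filter_five_le] at hprod
    nlinarith [mul_nonneg (mul_nonneg (hN 2) (hN 3)) (hN 4)]
  have h4 : N 4 < s := by
    refine (Odd.strictMono_pow (R := ℝ) (by decide : Odd 3)).lt_iff_lt.mp ?_
    calc N 4 ^ 3 = N 4 * N 4 * N 4 := by ring
      _ ≤ N 2 * N 3 * N 4 := by
        have h24 : N 4 ≤ N 2 := hmono (by decide)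
        have h34 : N 4 ≤ N 3 := hmono (by decide)
        gcongr <;> exact hN _
      _ < a := hcompl
      _ ≤ s ^ 3 := hs
  refine hM.not_gt (hgap.prod_union_lt hN ?_ fun i hi => ?_)
  · exact hgap.prod_lt_of_le ((prod_pair (by decide)).trans_le h01)
  · have hi4 : N i ≤ N 4 := hmono (Fin.le_def.mpr ((by decide : 4 ≤ 5).trans (mem_filter.mp hi).2))
    rw [← has]
    exact mul_le_mul_of_nonneg_left (hi4.trans h4.le) ha.le

theorem grouping_of_subprodsAvoid (hmono : Antitone N) (hone : ∀ i, 1 ≤ N i)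
    (ha : 0 < a) (hprod : a * b = ∏ i, N i) (has : a * s = b) (hs : a ≤ s ^ 3)
    (h01 : N 0 * N 1 ≤ b) (hgap : SubprodsAvoid N (Set.Icc a b)) :
    N 0 * N 1 * ∏ i ∈ univ.filter (fun i : Fin 14 => 5 ≤ (i : ℕ)), N i < a ∧
      N 2 * N 3 < a ∧ s < N 4 ∧
      N 2 * N 3 ≤ N 0 * N 1 * ∏ i ∈ univ.filter (fun i : Fin 14 => 5 ≤ (i : ℕ)), N i ∧
      b < (N 0 * N 1 * ∏ i ∈ univ.filter (fun i : Fin 14 => 5 ≤ (i : ℕ)), N i) * N 4 := by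
  have hNpos i : 0 < N i := zero_lt_one.trans_le (hone i)
  have hN i : 0 ≤ N i := (hNpos i).le
  have hM := pair_mul_prod_filter_five_le_lt hmono hN ha hprod has hs h01 hgap
  have hM0 : 0 < N 0 * N 1 * ∏ i ∈ univ.filter (fun i : Fin 14 => 5 ≤ (i : ℕ)), N i :=
    mul_pos (mul_pos (hNpos 0) (hNpos 1)) (prod_pos fun i _ => hNpos i)
  rw [prod_univ_fin_fourteen] at hprod
  set M := N 0 * N 1 * ∏ i ∈ univ.filter (fun i : Fin 14 => 5 ≤ (i : ℕ)), N i
  have h23 : N 2 * N 3 ≤ N 0 * N 1 :=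
    mul_le_mul (hmono (by decide)) (hmono (by decide)) (hN 3) (hN 0)
  have hP : N 2 * N 3 < a := by
    rw [← prod_pair (show (2 : Fin 14) ≠ 3 by decide)] at h23 ⊢
    exact hgap.prod_lt_of_le (h23.trans h01)
  refine ⟨hM, hP, ?_, ?_, ?_⟩
  · have hMP : M * (N 2 * N 3) < a * a := mul_lt_mul'' hM hP hM0.le (mul_nonneg (hN 2) (hN 3))
    refine lt_of_mul_lt_mul_left ?_ (mul_self_nonneg a)
    calc a * a * s = M * (N 2 * N 3) * N 4 := by linear_combination hprod + a * has
      _ < a * a * N 4 := mul_lt_mul_of_pos_right hMP (hNpos 4)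
  · exact h23.trans (le_mul_of_one_le_right (mul_nonneg (hN 0) (hN 1))
      (one_le_prod fun i _ => hone i))
  · refine lt_of_mul_lt_mul_right ?_ ha.le
    calc b * a = M * N 4 * (N 2 * N 3) := by linear_combination hprod
      _ < M * N 4 * a := mul_lt_mul_of_pos_left hP (mul_pos hM0 (hNpos 4))

end Grouping

theorem stmt_14_general (x₀ : ℝ) (N : Fin 14 → ℝ)
    (hmono : ∀ i j : Fin 14, i ≤ j → N j ≤ N i)
    (hone : ∀ i, 1 ≤ N i)
    (hx₀ : x₀ = ∏ i, N i)
    (h12 : N 0 * N 1 < x₀ ^ ((1 : ℝ) / 2))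
    (hnosub : ∀ S : Finset (Fin 14),
      ¬ (x₀ ^ ((5 : ℝ) / 12) ≤ ∏ i ∈ S, N i ∧ ∏ i ∈ S, N i ≤ x₀ ^ ((7 : ℝ) / 12))) :
    N 0 * N 1 * ∏ i ∈ Finset.univ.filter (fun i : Fin 14 => 5 ≤ (i : ℕ)), N i
        < x₀ ^ ((5 : ℝ) / 12) ∧
      N 2 * N 3 < x₀ ^ ((5 : ℝ) / 12) ∧
      N 4 > x₀ ^ ((1 : ℝ) / 6) ∧
      N 2 * N 3 ≤ N 0 * N 1 * ∏ i ∈ Finset.univ.filter (fun i : Fin 14 => 5 ≤ (i : ℕ)), N i ∧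
      x₀ ^ ((1 : ℝ) / 2) ≤
        (N 0 * N 1 * ∏ i ∈ Finset.univ.filter (fun i : Fin 14 => 5 ≤ (i : ℕ)), N i) * N 4 := by
  have hx₀one : 1 ≤ x₀ := hx₀ ▸ one_le_prod fun i _ => hone i
  have hx₀pos : 0 < x₀ := zero_lt_one.trans_le hx₀one
  have hhalf : x₀ ^ ((1 : ℝ) / 2) ≤ x₀ ^ ((7 : ℝ) / 12) :=
    Real.rpow_le_rpow_of_exponent_le hx₀one (by norm_num)
  have hprod : x₀ ^ ((5 : ℝ) / 12) * x₀ ^ ((7 : ℝ) / 12) = ∏ i, N i := by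
    rw [← Real.rpow_add hx₀pos]; norm_num [hx₀]
  have has : x₀ ^ ((5 : ℝ) / 12) * x₀ ^ ((1 : ℝ) / 6) = x₀ ^ ((7 : ℝ) / 12) := by
    rw [← Real.rpow_add hx₀pos]; norm_num
  have hs : x₀ ^ ((5 : ℝ) / 12) ≤ (x₀ ^ ((1 : ℝ) / 6)) ^ 3 := by
    rw [← Real.rpow_natCast, ← Real.rpow_mul hx₀pos.le]
    exact Real.rpow_le_rpow_of_exponent_le hx₀one (by norm_num)
  obtain ⟨hM, hP, h4, hPM, hMN4⟩ := grouping_of_subprodsAvoid (fun i j h => hmono i j h) hone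
    (by positivity) hprod has hs (h12.le.trans hhalf) hnosub
  exact ⟨hM, hP, h4, hPM, hhalf.trans hMN4.le⟩

/-- Case 3 grouping: if `N₁ ≥ ⋯ ≥ N₁₄ ≥ 1` with product `x₀ ≤ x`,
`N₁N₂ < x₀^{1/2}`, and no sub-product lies in `[x₀^{5/12}, x₀^{7/12}]`, then
`M = N₁N₂N₆⋯N₁₄ < x₀^{5/12}`, `N = N₃N₄ < x₀^{5/12}`, `N₅ > x₀^{1/6}`,
`M ≥ N`, and `M·N₅ ≥ x₀^{1/2}`. -/
theorem stmt_14 (x x₀ : ℝ) (N : Fin 14 → ℝ)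
    (hmono : ∀ i j : Fin 14, i ≤ j → N j ≤ N i)
    (hone : ∀ i, 1 ≤ N i)
    (hx₀ : x₀ = ∏ i, N i) (hx : x₀ ≤ x) (hx₀pos : 0 < x₀)
    (h12 : N 0 * N 1 < x₀ ^ ((1 : ℝ) / 2))
    (hnosub : ∀ S : Finset (Fin 14),
      ¬ (x₀ ^ ((5 : ℝ) / 12) ≤ ∏ i ∈ S, N i ∧ ∏ i ∈ S, N i ≤ x₀ ^ ((7 : ℝ) / 12))) :
    N 0 * N 1 * ∏ i ∈ Finset.univ.filter (fun i : Fin 14 => 5 ≤ (i : ℕ)), N i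
        < x₀ ^ ((5 : ℝ) / 12) ∧
      N 2 * N 3 < x₀ ^ ((5 : ℝ) / 12) ∧
      N 4 > x₀ ^ ((1 : ℝ) / 6) ∧
      N 2 * N 3 ≤ N 0 * N 1 * ∏ i ∈ Finset.univ.filter (fun i : Fin 14 => 5 ≤ (i : ℕ)), N i ∧
      x₀ ^ ((1 : ℝ) / 2) ≤
        (N 0 * N 1 * ∏ i ∈ Finset.univ.filter (fun i : Fin 14 => 5 ≤ (i : ℕ)), N i) * N 4 :=
  stmt_14_general x₀ N hmono hone hx₀ h12 hnosub
end
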